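/- Let T be a bounded linear operator on a complex Hilbert space H and c > 0. Then ((2+3c)/(32(1+c)))·‖|T|⁴ + |T*|⁴‖ + ((2+3c)/(16(1+c)))·w(|T*|²|T|²) + ((6+5c)/(16(1+c)))·w(T²)·‖|T|² + |T*|²‖ ≤ (1/2)·‖|T|⁴ + |T*|⁴‖. -/

import Mathlib

open scoped InnerProductSpace
open ContinuousLinearMap Finset

variable {H : Type*} [NormedAddCommGroup H] [InnerProductSpace ℂ H] [CompleteSpace H]

/-- The numerical radius of a bounded operator. -/
noncomputable def numRadius (T : H →L[ℂ] H) : ℝ :=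
  sSup ((fun x : H => ‖⟪T x, x⟫_ℂ‖) '' {x : H | ‖x‖ = 1})

/-- The absolute value |T| = (T*T)^(1/2). -/
noncomputable def opAbs (T : H →L[ℂ] H) : H →L[ℂ] H :=
  CFC.sqrt (ContinuousLinearMap.adjoint T * T)

/-- Real power of a (positive) operator via continuous functional calculus. -/
noncomputable def opPow (T : H →L[ℂ] H) (r : ℝ) : H →L[ℂ] H :=
  CFC.rpow T r

lemma numRadius_le (T : H →L[ℂ] H) {M : ℝ} (hM : 0 ≤ M)
    (h : ∀ x : H, ‖x‖ = 1 → ‖⟪T x, x⟫_ℂ‖ ≤ M) : numRadius T ≤ M := by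
  apply Real.sSup_le _ hM
  rintro y ⟨x, hx, rfl⟩
  exact h x hx

lemma numRadius_nonneg (T : H →L[ℂ] H) : 0 ≤ numRadius T := by
  apply Real.sSup_nonneg
  rintro y ⟨x, hx, rfl⟩
  positivity

lemma inner_sq_self {S : H →L[ℂ] H} (hS : IsSelfAdjoint S) (x : H) :
    ⟪(S ^ 2) x, x⟫_ℂ = ((‖S x‖ : ℂ)) ^ 2 := by
  rw [pow_two, ContinuousLinearMap.mul_apply]
  calc ⟪S (S x), x⟫_ℂ = ⟪(ContinuousLinearMap.adjoint S) (S x), x⟫_ℂ := by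
        rw [hS.adjoint_eq]
    _ = ⟪S x, S x⟫_ℂ := adjoint_inner_left _ _ _
    _ = ((‖S x‖ : ℂ)) ^ 2 := inner_self_eq_norm_sq_to_K _

/-- Key: sum of squared norms bounded by norm of sum of squares. -/
lemma key_sum {S₁ S₂ : H →L[ℂ] H} (h₁ : IsSelfAdjoint S₁) (h₂ : IsSelfAdjoint S₂)
    (x : H) : ‖S₁ x‖ ^ 2 + ‖S₂ x‖ ^ 2 ≤ ‖S₁ ^ 2 + S₂ ^ 2‖ * ‖x‖ ^ 2 := by
  have hip : ⟪(S₁ ^ 2 + S₂ ^ 2) x, x⟫_ℂ = ((‖S₁ x‖ ^ 2 + ‖S₂ x‖ ^ 2 : ℝ) : ℂ) := by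
    rw [add_apply, inner_add_left, inner_sq_self h₁, inner_sq_self h₂]
    push_cast
    ring
  calc ‖S₁ x‖ ^ 2 + ‖S₂ x‖ ^ 2 = ‖⟪(S₁ ^ 2 + S₂ ^ 2) x, x⟫_ℂ‖ := by
        rw [hip, Complex.norm_real, Real.norm_of_nonneg (by positivity)]
    _ ≤ ‖(S₁ ^ 2 + S₂ ^ 2) x‖ * ‖x‖ := norm_inner_le_norm _ _
    _ ≤ (‖S₁ ^ 2 + S₂ ^ 2‖ * ‖x‖) * ‖x‖ :=
        mul_le_mul_of_nonneg_right (le_opNorm _ _) (norm_nonneg x)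
    _ = ‖S₁ ^ 2 + S₂ ^ 2‖ * ‖x‖ ^ 2 := by ring

set_option maxHeartbeats 1000000 in
theorem stmt16 (T : H →L[ℂ] H) (c : ℝ) (hc : 0 < c) :
    (2 + 3 * c) / (32 * (1 + c)) * ‖opAbs T ^ 4 + opAbs (adjoint T) ^ 4‖
      + (2 + 3 * c) / (16 * (1 + c)) * numRadius (opAbs (adjoint T) ^ 2 * opAbs T ^ 2)
      + (6 + 5 * c) / (16 * (1 + c)) * (numRadius (T ^ 2)
          * ‖opAbs T ^ 2 + opAbs (adjoint T) ^ 2‖)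
      ≤ (1 / 2) * ‖opAbs T ^ 4 + opAbs (adjoint T) ^ 4‖ := by
  set A := opAbs T with hA
  set B := opAbs (adjoint T) with hB
  have hTT : (0 : H →L[ℂ] H) ≤ adjoint T * T := by
    rw [← star_eq_adjoint]; exact star_mul_self_nonneg T
  have hTT' : (0 : H →L[ℂ] H) ≤ adjoint (adjoint T) * adjoint T := by
    rw [← star_eq_adjoint]; exact star_mul_self_nonneg (adjoint T)
  have hAsa : IsSelfAdjoint A := (CFC.sqrt_nonneg (a := adjoint T * T)).isSelfAdjoint
  have hBsa : IsSelfAdjoint B :=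
    (CFC.sqrt_nonneg (a := adjoint (adjoint T) * adjoint T)).isSelfAdjoint
  have hA2 : A ^ 2 = adjoint T * T := CFC.sq_sqrt _ hTT
  have hB2 : B ^ 2 = T * adjoint T := by
    rw [hB, opAbs, CFC.sq_sqrt _ hTT', adjoint_adjoint]
  have hA2sa : IsSelfAdjoint (A ^ 2) := hAsa.pow 2
  have hB2sa : IsSelfAdjoint (B ^ 2) := hBsa.pow 2
  -- norms of A x and T x agree
  have hnA : ∀ x : H, ‖A x‖ = ‖T x‖ := by
    intro x
    have h1 : ((‖A x‖ : ℂ)) ^ 2 = ((‖T x‖ : ℂ)) ^ 2 := by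
      rw [← inner_sq_self hAsa x, hA2, ContinuousLinearMap.mul_apply]
      rw [show ⟪(adjoint T) (T x), x⟫_ℂ = ⟪T x, T x⟫_ℂ from adjoint_inner_left _ _ _,
        inner_self_eq_norm_sq_to_K]
      norm_cast
    have h2 : (‖A x‖ : ℝ) ^ 2 = (‖T x‖ : ℝ) ^ 2 := by
      exact_mod_cast h1
    have h3 := (sq_eq_sq_iff_abs_eq_abs _ _).mp h2
    rwa [abs_of_nonneg (norm_nonneg _), abs_of_nonneg (norm_nonneg _)] at h3
  have hnB : ∀ x : H, ‖B x‖ = ‖(adjoint T) x‖ := by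
    intro x
    have h1 : ((‖B x‖ : ℂ)) ^ 2 = ((‖(adjoint T) x‖ : ℂ)) ^ 2 := by
      rw [← inner_sq_self hBsa x, hB2, ContinuousLinearMap.mul_apply]
      calc ⟪T ((adjoint T) x), x⟫_ℂ
          = ⟪(adjoint (adjoint T)) ((adjoint T) x), x⟫_ℂ := by rw [adjoint_adjoint]
        _ = ⟪(adjoint T) x, (adjoint T) x⟫_ℂ := adjoint_inner_left _ _ _
        _ = ((‖(adjoint T) x‖ : ℂ)) ^ 2 := inner_self_eq_norm_sq_to_K _
    have h2 : (‖B x‖ : ℝ) ^ 2 = (‖(adjoint T) x‖ : ℝ) ^ 2 := by exact_mod_cast h1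
    have h3 := (sq_eq_sq_iff_abs_eq_abs _ _).mp h2
    rwa [abs_of_nonneg (norm_nonneg _), abs_of_nonneg (norm_nonneg _)] at h3
  set N := ‖A ^ 4 + B ^ 4‖ with hNdef
  set S := ‖A ^ 2 + B ^ 2‖ with hSdef
  have hN0 : 0 ≤ N := norm_nonneg _
  have hS0 : 0 ≤ S := norm_nonneg _
  have hpow : (A ^ 2) ^ 2 + (B ^ 2) ^ 2 = A ^ 4 + B ^ 4 := by
    rw [← pow_mul, ← pow_mul]
  -- fourth-power key inequality
  have key4 : ∀ x : H, ‖(A ^ 2) x‖ ^ 2 + ‖(B ^ 2) x‖ ^ 2 ≤ N * ‖x‖ ^ 2 := by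
    intro x
    have := key_sum hA2sa hB2sa x
    rwa [hpow] at this
  -- second-power key inequality
  have key2 : ∀ x : H, ‖A x‖ ^ 2 + ‖B x‖ ^ 2 ≤ S * ‖x‖ ^ 2 := fun x =>
    key_sum hAsa hBsa x
  -- (1) numRadius (B² A²) ≤ N / 2
  have hW : numRadius (B ^ 2 * A ^ 2) ≤ N / 2 := by
    apply numRadius_le _ (by linarith)
    intro x hx
    have hcalc : ⟪(B ^ 2 * A ^ 2) x, x⟫_ℂ = ⟪(A ^ 2) x, (B ^ 2) x⟫_ℂ := by
      rw [ContinuousLinearMap.mul_apply]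
      calc ⟪(B ^ 2) ((A ^ 2) x), x⟫_ℂ
          = ⟪(ContinuousLinearMap.adjoint (B ^ 2)) ((A ^ 2) x), x⟫_ℂ := by
            rw [hB2sa.adjoint_eq]
        _ = ⟪(A ^ 2) x, (B ^ 2) x⟫_ℂ := adjoint_inner_left _ _ _
    rw [hcalc]
    have h1 : ‖⟪(A ^ 2) x, (B ^ 2) x⟫_ℂ‖ ≤ ‖(A ^ 2) x‖ * ‖(B ^ 2) x‖ :=
      norm_inner_le_norm _ _
    have h2 := key4 x
    rw [hx] at h2
    nlinarith [sq_nonneg (‖(A ^ 2) x‖ - ‖(B ^ 2) x‖)]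
  -- (2) numRadius (T²) ≤ S / 2
  have hV : numRadius (T ^ 2) ≤ S / 2 := by
    apply numRadius_le _ (by linarith)
    intro x hx
    have hcalc : ⟪(T ^ 2) x, x⟫_ℂ = ⟪T x, (adjoint T) x⟫_ℂ := by
      rw [pow_two, ContinuousLinearMap.mul_apply]
      exact (adjoint_inner_right T (T x) x).symm
    rw [hcalc]
    have h1 : ‖⟪T x, (adjoint T) x⟫_ℂ‖ ≤ ‖T x‖ * ‖(adjoint T) x‖ :=
      norm_inner_le_norm _ _
    have h2 := key2 x
    rw [hx, hnA x, hnB x] at h2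
    nlinarith [sq_nonneg (‖T x‖ - ‖(adjoint T) x‖)]
  -- (3) S² ≤ 2 N
  have hS2 : S ^ 2 ≤ 2 * N := by
    have hb : S ≤ Real.sqrt (2 * N) := by
      apply opNorm_le_bound _ (Real.sqrt_nonneg _)
      intro x
      have h2 := key4 x
      have hx2 : ‖(A ^ 2 + B ^ 2) x‖ ^ 2 ≤ 2 * N * ‖x‖ ^ 2 := by
        have htri : ‖(A ^ 2 + B ^ 2) x‖ ≤ ‖(A ^ 2) x‖ + ‖(B ^ 2) x‖ := by
          rw [add_apply]; exact norm_add_le _ _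
        nlinarith [sq_nonneg (‖(A ^ 2) x‖ - ‖(B ^ 2) x‖), norm_nonneg ((A ^ 2 + B ^ 2) x),
          norm_nonneg ((A ^ 2) x), norm_nonneg ((B ^ 2) x)]
      have : ‖(A ^ 2 + B ^ 2) x‖ ≤ Real.sqrt (2 * N) * ‖x‖ := by
        rw [← Real.sqrt_sq (norm_nonneg ((A ^ 2 + B ^ 2) x)),
          ← Real.sqrt_mul_self (norm_nonneg x)]
        rw [← Real.sqrt_mul (by positivity)]
        apply Real.sqrt_le_sqrt
        calc ‖(A ^ 2 + B ^ 2) x‖ ^ 2 ≤ 2 * N * ‖x‖ ^ 2 := hx2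
          _ = 2 * N * (‖x‖ * ‖x‖) := by ring
      exact this
    calc S ^ 2 ≤ Real.sqrt (2 * N) ^ 2 := by
          exact pow_le_pow_left₀ hS0 hb 2
      _ = 2 * N := Real.sq_sqrt (by positivity)
  -- final arithmetic
  have hV0 : 0 ≤ numRadius (T ^ 2) := numRadius_nonneg _
  have hW0 : 0 ≤ numRadius (B ^ 2 * A ^ 2) := numRadius_nonneg _
  have hc1 : (0:ℝ) < 1 + c := by linarith
  set W := numRadius (B ^ 2 * A ^ 2)
  set V := numRadius (T ^ 2)
  have ha : (0:ℝ) ≤ (2 + 3 * c) / (32 * (1 + c)) := by positivity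
  have hd : (0:ℝ) ≤ (6 + 5 * c) / (16 * (1 + c)) := by positivity
  have h2a : (2 + 3 * c) / (16 * (1 + c)) = 2 * ((2 + 3 * c) / (32 * (1 + c))) := by
    field_simp; ring
  have hsum : 2 * ((2 + 3 * c) / (32 * (1 + c))) + (6 + 5 * c) / (16 * (1 + c))
      = 1 / 2 := by
    field_simp; ring
  set a := (2 + 3 * c) / (32 * (1 + c)) with hadef
  set d := (6 + 5 * c) / (16 * (1 + c)) with hddef
  rw [h2a]
  have hVS : V * S ≤ N := by
    have h1 : V * S ≤ (S / 2) * S := mul_le_mul_of_nonneg_right hV hS0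
    nlinarith
  nlinarith [mul_le_mul_of_nonneg_left hW (by linarith : (0:ℝ) ≤ 2 * a),
    mul_le_mul_of_nonneg_left hVS hd]
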